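/- Let X_1, …, X_m (m ≥ 2) be i.i.d. real random variables with continuous cdf F satisfying F(a) = 0 (support bounded below by a), and let z > a satisfy F(z) > 0. Then the conditional expectation of the second-highest value given that the maximum is at most z satisfies E[ second-highest of X_1,…,X_m | max_i X_i ≤ z ] = z − m·∫_a^z ( F(t)/F(z) )^{m−1} dt + (m−1)·∫_a^z ( F(t)/F(z) )^m dt. -/

import Mathlib

/-!
Given that the maximum is at most `z`, for `t ≤ z` the event `S ≤ t` is the disjoint union of
"every draw is `≤ t`" and, for each `i`, "draw `i` lies in `(t, z]` and all others are `≤ t`".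
Independence gives it probability `F t ^ m + m (F z - F t) F t ^ (m - 1)`; dividing by
`F z ^ m` yields the conditional cdf `m r ^ (m - 1) - (m - 1) r ^ m` with `r = F t / F z`.
As `S` lies in `[a, z]` almost surely, the layer-cake formula `E S = z - ∫ₐᶻ P(S ≤ t) dt`
finishes the computation.
-/

open MeasureTheory ProbabilityTheory intervalIntegral Set

theorem cond_real_apply {Ω : Type*} [MeasurableSpace Ω] {μ : Measure Ω} {s : Set Ω}
    (hs : MeasurableSet s) (t : Set Ω) : μ[|s].real t = (μ.real s)⁻¹ * μ.real (s ∩ t) := by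
  rw [measureReal_def, cond_apply hs, ENNReal.toReal_mul, ENNReal.toReal_inv]
  rfl

theorem integral_eq_sub_intervalIntegral_measureReal_le {Ω : Type*} [MeasurableSpace Ω]
    {ν : Measure Ω} [IsProbabilityMeasure ν] {S : Ω → ℝ} (hS : AEMeasurable S ν)
    {a z : ℝ} (hSaz : ∀ᵐ ω ∂ν, S ω ∈ Icc a z) :
    ∫ ω, S ω ∂ν = z - ∫ t in a..z, ν.real {ω | S ω ≤ t} := by
  obtain ⟨_, hω⟩ := hSaz.exists
  have haz : a ≤ z := hω.1.trans hω.2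
  have htail_le : ∀ t, ν.real {ω | t < S ω - a} = 1 - ν.real {ω | S ω ≤ a + t} := by
    intro t
    rw [← probReal_compl_eq_one_sub₀ (nullMeasurableSet_le hS aemeasurable_const)]
    congr 1
    ext ω
    simp [lt_sub_iff_add_lt']
  have htail_gt : ∀ t, z - a < t → ν.real {ω | t < S ω - a} = 0 := fun t ht => by
    refine (measureReal_eq_zero_iff).2 (measure_eq_zero_iff_ae_notMem.2 ?_)
    filter_upwards [hSaz] with ω hω
    simp only [not_lt]
    linarith [hω.2]
  have hSa_nonneg : 0 ≤ᵐ[ν] fun ω => S ω - a := by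
    filter_upwards [hSaz] with ω hω using sub_nonneg.2 hω.1
  have hSint : Integrable S ν := .of_mem_Icc a z hS hSaz
  have hcdf_int : IntervalIntegrable (fun t => ν.real {ω | S ω ≤ t}) volume a z :=
    Monotone.intervalIntegrable fun s t hst =>
      measureReal_mono fun ω (hω : S ω ≤ s) => hω.trans hst
  calc ∫ ω, S ω ∂ν = a + ∫ ω, (S ω - a) ∂ν := by
        rw [integral_sub hSint (integrable_const a)]
        simp
    _ = a + ∫ t in Ioi 0, ν.real {ω | t < S ω - a} := by
        rw [Integrable.integral_eq_integral_meas_lt (f := fun ω => S ω - a)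
          (hSint.sub (integrable_const a)) hSa_nonneg]
    _ = a + ∫ t in Ioc 0 (z - a), (1 - ν.real {ω | S ω ≤ a + t}) := by
        rw [setIntegral_eq_of_subset_of_forall_sdiff_eq_zero measurableSet_Ioi Ioc_subset_Ioi_self
          fun t ht => htail_gt t (not_le.1 fun h => ht.2 ⟨ht.1, h⟩),
          setIntegral_congr_fun measurableSet_Ioc fun t _ => htail_le t]
    _ = a + ∫ t in a..z, (1 - ν.real {ω | S ω ≤ t}) := by
        rw [← integral_of_le (sub_nonneg.2 haz),
          integral_comp_add_left (fun s => 1 - ν.real {ω | S ω ≤ s}), add_zero, add_sub_cancel]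
    _ = z - ∫ t in a..z, ν.real {ω | S ω ≤ t} := by
        rw [integral_sub intervalIntegrable_const hcdf_int, intervalIntegral.integral_const,
          smul_eq_mul, mul_one]
        ring

section SecondLargest

variable {ι α : Type*} [LinearOrder α]

def IsSecondLargest {Ω : Type*} (X : ι → Ω → α) (S : Ω → α) : Prop :=
  ∀ ω t, S ω ≤ t ↔ ∃ i, ∀ j ≠ i, X j ω ≤ t

theorem Finset.inf'_sup'_erase_le_iff [Fintype ι] [DecidableEq ι] (f : ι → α)
    (hι : (Finset.univ : Finset ι).Nonempty) (h : ∀ i, (Finset.univ.erase i).Nonempty)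
    (t : α) :
    Finset.univ.inf' hι (fun i => (Finset.univ.erase i).sup' (h i) f) ≤ t ↔
      ∃ i, ∀ j ≠ i, f j ≤ t := by
  simp only [Finset.inf'_le_iff, Finset.sup'_le_iff, Finset.mem_univ, true_and,
    Finset.mem_erase, and_true]

theorem setOf_forall_le_and_exists_forall_ne_le [DecidableEq ι] [Nonempty ι] {Ω : Type*}
    (X : ι → Ω → α) {t z : α} (htz : t ≤ z) :
    {ω | (∀ i, X i ω ≤ z) ∧ ∃ i, ∀ j ≠ i, X j ω ≤ t} =
      {ω | ∀ j, X j ω ≤ t} ∪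
        ⋃ i, ⋂ j, X j ⁻¹' Function.update (fun _ => Iic t) i (Ioc t z) j := by
  ext ω
  simp only [mem_ofPred_eq, mem_union, mem_iInter, mem_iUnion, mem_preimage]
  constructor
  · rintro ⟨hz, i, hi⟩
    by_cases hit : X i ω ≤ t
    · exact Or.inl fun j => if hj : j = i then hj ▸ hit else hi j hj
    · refine Or.inr ⟨i, fun j => ?_⟩
      rcases eq_or_ne j i with rfl | hj
      · simpa using ⟨not_le.mp hit, hz j⟩
      · simpa [hj] using hi j hj
  · rintro (hle | ⟨i, hi⟩)
    · exact ⟨fun j => (hle j).trans htz, Classical.arbitrary ι, fun j _ => hle j⟩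
    · have hi' : ∀ j ≠ i, X j ω ≤ t := fun j hj => by simpa [hj] using hi j
      have hii : X i ω ∈ Ioc t z := by simpa using hi i
      exact ⟨fun j => if hj : j = i then hj ▸ hii.2 else (hi' j hj).trans htz, i, hi'⟩

end SecondLargest

section IndependentDraws

variable {ι Ω : Type*} [Fintype ι] [MeasurableSpace Ω] {μ : Measure Ω} {X : ι → Ω → ℝ}
  {F : ℝ → ℝ} {S : Ω → ℝ}

theorem ProbabilityTheory.iIndepFun.measureReal_iInter_preimage (hX : iIndepFun X μ)
    {B : ι → Set ℝ} (hB : ∀ i, MeasurableSet (B i)) :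
    μ.real (⋂ i, X i ⁻¹' B i) = ∏ i, μ.real (X i ⁻¹' B i) := by
  rw [measureReal_def, hX.meas_iInter fun i => ⟨B i, hB i, rfl⟩, ENNReal.toReal_prod]
  rfl

theorem measureReal_preimage_Ioc [IsFiniteMeasure μ] {Y : Ω → ℝ} (hY : Measurable Y)
    (hcdf : ∀ t, μ.real {ω | Y ω ≤ t} = F t) {s t : ℝ} (hst : s ≤ t) :
    μ.real (Y ⁻¹' Ioc s t) = F t - F s := by
  rw [← Iic_sdiff_Iic, preimage_sdiff, measureReal_sdiff (preimage_mono (Iic_subset_Iic.2 hst))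
    (hY measurableSet_Iic)]
  simp only [← hcdf]
  rfl

theorem monotone_of_measureReal_le_eq [IsFiniteMeasure μ] {Y : Ω → ℝ}
    (hcdf : ∀ t, μ.real {ω | Y ω ≤ t} = F t) : Monotone F := fun s t hst => by
  simp only [← hcdf]
  exact measureReal_mono fun ω (hω : Y ω ≤ s) => hω.trans hst

theorem measurableSet_setOf_forall_le (hXm : ∀ i, Measurable (X i)) (t : ℝ) :
    MeasurableSet {ω | ∀ i, X i ω ≤ t} := by
  rw [ofPred_forall]
  exact .iInter fun i => hXm i measurableSet_Iic

theorem measureReal_setOf_forall_le (hX : iIndepFun X μ)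
    (hcdf : ∀ i t, μ.real {ω | X i ω ≤ t} = F t) (t : ℝ) :
    μ.real {ω | ∀ i, X i ω ≤ t} = F t ^ Fintype.card ι := by
  rw [ofPred_forall]
  refine (hX.measureReal_iInter_preimage fun _ => measurableSet_Iic).trans ?_
  simp only [show ∀ i, μ.real (X i ⁻¹' Iic t) = F t from fun i => hcdf i t, Finset.prod_const,
    Finset.card_univ]

theorem measureReal_forall_le_and_exists_forall_ne_le [IsFiniteMeasure μ] [Nonempty ι]
    (hXm : ∀ i, Measurable (X i)) (hX : iIndepFun X μ)
    (hcdf : ∀ i t, μ.real {ω | X i ω ≤ t} = F t) {t z : ℝ} (htz : t ≤ z) :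
    μ.real {ω | (∀ i, X i ω ≤ z) ∧ ∃ i, ∀ j ≠ i, X j ω ≤ t} =
      F t ^ Fintype.card ι + Fintype.card ι * ((F z - F t) * F t ^ (Fintype.card ι - 1)) := by
  classical
  set B : ι → ι → Set ℝ := fun i => Function.update (fun _ => Iic t) i (Ioc t z)
  have hB : ∀ i j, MeasurableSet (B i j) := fun i j => by
    rcases eq_or_ne j i with rfl | hj
    · simp [B]
    · simp [B, hj]
  have hdisj : Disjoint {ω | ∀ j, X j ω ≤ t} (⋃ i, ⋂ j, X j ⁻¹' B i j) := by
    refine disjoint_left.2 fun ω hle hω => ?_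
    obtain ⟨i, hi⟩ := mem_iUnion.1 hω
    have : X i ω ∈ Ioc t z := by simpa [B] using mem_iInter.1 hi i
    exact not_le.2 this.1 (hle i)
  have hpair : Pairwise (Function.onFun Disjoint fun i => ⋂ j, X j ⁻¹' B i j) := by
    refine fun i k hik => disjoint_left.2 fun ω hωi hωk => ?_
    have hk : X k ω ∈ Ioc t z := by simpa [B] using mem_iInter.1 hωk k
    have hk' : X k ω ≤ t := by simpa [B, hik.symm] using mem_iInter.1 hωi k
    exact not_le.2 hk.1 hk'
  have hIic : ∀ j, μ.real (X j ⁻¹' Iic t) = F t := fun j => hcdf j t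
  have hbox : ∀ i,
      μ.real (⋂ j, X j ⁻¹' B i j) = (F z - F t) * F t ^ (Fintype.card ι - 1) := by
    intro i
    have hother : ∀ j ∈ ({i}ᶜ : Finset ι), μ.real (X j ⁻¹' B i j) = F t := fun j hj => by
      rw [← hIic j, show B i j = Iic t from Function.update_of_ne (by simpa using hj) ..]
    rw [hX.measureReal_iInter_preimage (hB i), Fintype.prod_eq_mul_prod_compl i,
      Finset.prod_congr rfl hother, Finset.prod_const, Finset.card_compl, Finset.card_singleton]
    simp [B, measureReal_preimage_Ioc (hXm i) (hcdf i) htz]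
  rw [setOf_forall_le_and_exists_forall_ne_le X htz, measureReal_union hdisj
    (.iUnion fun i => .iInter fun j => hXm j (hB i j)), measureReal_setOf_forall_le hX hcdf,
    measureReal_iUnion_fintype hpair fun i => .iInter fun j => hXm j (hB i j)]
  simp only [hbox, Finset.sum_const, Finset.card_univ, nsmul_eq_mul]

theorem IsSecondLargest.measurable (hXm : ∀ i, Measurable (X i)) (hS : IsSecondLargest X S) :
    Measurable S := by
  refine measurable_of_Iic fun t => ?_
  have hpre : S ⁻¹' Iic t = ⋃ i, ⋂ j, ⋂ (_ : j ≠ i), X j ⁻¹' Iic t := by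
    ext ω
    simp [hS ω t]
  rw [hpre]
  exact .iUnion fun i => .iInter fun j => .iInter fun _ => hXm j measurableSet_Iic

theorem cond_measureReal_le_of_isSecondLargest [IsFiniteMeasure μ] [Nonempty ι]
    (hXm : ∀ i, Measurable (X i)) (hX : iIndepFun X μ)
    (hcdf : ∀ i t, μ.real {ω | X i ω ≤ t} = F t) (hS : IsSecondLargest X S) {t z : ℝ}
    (htz : t ≤ z) (hFz : F z ≠ 0) :
    μ[|{ω | ∀ i, X i ω ≤ z}].real {ω | S ω ≤ t} =
      Fintype.card ι * (F t / F z) ^ (Fintype.card ι - 1)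
        - (Fintype.card ι - 1 : ℝ) * (F t / F z) ^ Fintype.card ι := by
  have hevent : {ω | ∀ i, X i ω ≤ z} ∩ {ω | S ω ≤ t} =
      {ω | (∀ i, X i ω ≤ z) ∧ ∃ i, ∀ j ≠ i, X j ω ≤ t} := by
    ext ω
    simp [hS ω t]
  rw [cond_real_apply (measurableSet_setOf_forall_le hXm z), hevent,
    measureReal_forall_le_and_exists_forall_ne_le hXm hX hcdf htz,
    measureReal_setOf_forall_le hX hcdf]
  obtain ⟨n, hn⟩ : ∃ n, Fintype.card ι = n + 1 :=
    Nat.exists_eq_succ_of_ne_zero Fintype.card_ne_zero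
  rw [hn, Nat.add_sub_cancel, div_pow, div_pow]
  field_simp
  push_cast
  ring

theorem integral_cond_of_isSecondLargest [IsProbabilityMeasure μ] [Nontrivial ι]
    (hXm : ∀ i, Measurable (X i)) (hX : iIndepFun X μ)
    (hcdf : ∀ i t, μ.real {ω | X i ω ≤ t} = F t) (hS : IsSecondLargest X S) {a z : ℝ}
    (hFa : F a = 0) (hFz : 0 < F z) :
    ∫ ω, S ω ∂μ[|{ω | ∀ i, X i ω ≤ z}] =
      z - Fintype.card ι * (∫ t in a..z, (F t / F z) ^ (Fintype.card ι - 1))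
        + (Fintype.card ι - 1 : ℝ) * ∫ t in a..z, (F t / F z) ^ Fintype.card ι := by
  set A := {ω | ∀ i, X i ω ≤ z}
  have hmono : Monotone F := monotone_of_measureReal_le_eq (hcdf (Classical.arbitrary ι))
  have hF0 : ∀ t, 0 ≤ F t := fun t => hcdf (Classical.arbitrary ι) t ▸ measureReal_nonneg
  have haz : a ≤ z := (hmono.reflect_lt (hFa ▸ hFz)).le
  have hA : MeasurableSet A := measurableSet_setOf_forall_le hXm z
  have hμA : μ A ≠ 0 := by
    rw [← measureReal_ne_zero_iff, measureReal_setOf_forall_le hX hcdf]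
    exact (pow_pos hFz _).ne'
  have : IsProbabilityMeasure μ[|A] := cond_isProbabilityMeasure hμA
  have hcond := fun t (htz : t ≤ z) =>
    cond_measureReal_le_of_isSecondLargest hXm hX hcdf hS htz hFz.ne'
  have hle_a : μ[|A] {ω | S ω ≤ a} = 0 := by
    have hn : 1 < Fintype.card ι := Fintype.one_lt_card
    rw [← measureReal_eq_zero_iff, hcond a haz, hFa, zero_div,
      zero_pow (by omega : Fintype.card ι - 1 ≠ 0), zero_pow (by omega : Fintype.card ι ≠ 0),
      mul_zero, mul_zero, sub_zero]
  have hSaz : ∀ᵐ ω ∂μ[|A], S ω ∈ Icc a z := by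
    filter_upwards [ae_cond_mem hA, measure_eq_zero_iff_ae_notMem.1 hle_a] with ω hωA hωa
    exact ⟨(not_le.1 hωa).le, (hS ω z).2 ⟨Classical.arbitrary ι, fun j _ => hωA j⟩⟩
  have hint : ∀ k, IntervalIntegrable (fun t => (F t / F z) ^ k) volume a z := fun k =>
    Monotone.intervalIntegrable fun s t hst => pow_le_pow_left₀ (div_nonneg (hF0 s) hFz.le)
      (div_le_div_of_nonneg_right (hmono hst) hFz.le) k
  rw [integral_eq_sub_intervalIntegral_measureReal_le (hS.measurable hXm).aemeasurable hSaz,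
    integral_congr fun t ht => hcond t (uIcc_of_le haz ▸ ht).2,
    integral_sub ((hint _).const_mul _) ((hint _).const_mul _),
    intervalIntegral.integral_const_mul, intervalIntegral.integral_const_mul]
  ring

end IndependentDraws

/-- **Conditional expectation of the second-highest of i.i.d. draws given that
the maximum is at most `z`.**  Let `X 0, …, X (m-1)` (`m ≥ 2`) be i.i.d. real
random variables with continuous cdf `F` satisfying `F a = 0`, and let `z > a`
satisfy `F z > 0`.  Let `Y` be the maximum and `S` the second-highest value
(expressed as `min_i max_{j ≠ i} X_j`).  Then
`E[S | Y ≤ z] = z - m * ∫ t in a..z, (F t / F z)^(m-1)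
  + (m-1) * ∫ t in a..z, (F t / F z)^m`. -/
theorem cond_exp_second_highest_of_iid
    (m : ℕ) (hm : 2 ≤ m)
    {Ω : Type*} [MeasurableSpace Ω] (μ : Measure Ω) [IsProbabilityMeasure μ]
    (X : Fin m → Ω → ℝ)
    (hXmeas : ∀ i, Measurable (X i))
    (hXindep : iIndepFun X μ)
    (F : ℝ → ℝ)
    (hXcdf : ∀ i t, (μ {ω | X i ω ≤ t}).toReal = F t)
    (a : ℝ) (hFa : F a = 0)
    (z : ℝ) (hFz : 0 < F z)
    (Y S : Ω → ℝ)
    (hY : ∀ ω, Y ω = Finset.univ.sup'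
      ⟨⟨0, by omega⟩, Finset.mem_univ _⟩ (fun i => X i ω))
    (hS : ∀ ω, S ω = Finset.univ.inf'
      ⟨⟨0, by omega⟩, Finset.mem_univ _⟩
      (fun i => (Finset.univ.erase i).sup'
        (by
          rw [← Finset.card_pos, Finset.card_erase_of_mem (Finset.mem_univ i),
            Finset.card_univ, Fintype.card_fin]
          omega)
        (fun j => X j ω))) :
    ∫ ω, S ω ∂(μ[|{ω | Y ω ≤ z}]) =
      z - m * (∫ t in a..z, (F t / F z) ^ (m - 1))
        + (m - 1 : ℝ) * ∫ t in a..z, (F t / F z) ^ m := by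
  have hmax : {ω | Y ω ≤ z} = {ω | ∀ i, X i ω ≤ z} := by
    ext ω
    simp only [mem_ofPred_eq, hY]
    exact (Finset.sup'_le_iff _ _).trans (by simp)
  have : Nontrivial (Fin m) := Fin.nontrivial_iff_two_le.2 hm
  rw [hmax, integral_cond_of_isSecondLargest hXmeas hXindep hXcdf
    (fun ω t => hS ω ▸ Finset.inf'_sup'_erase_le_iff _ _ _ t) hFa hFz, Fintype.card_fin]
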